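/- For all real parameters μ, ν, γ with 0 < μ ≤ 1, γ > 0, ν ≥ μγ, every real x ≥ 0, and every complex number s, the probability generating function of the fractional generalized probability distribution satisfies ∑_{n=0}^∞ s^n · Γ(ν) · (x^n / n!) · (d^n/dz^n E_{μ,ν}^γ)(−x) = Γ(ν) · E_{μ,ν}^γ(x(s − 1)). -/

import Mathlib

/-!
The series on the left is `Γ(ν)` times the Taylor series of `E_{μ,ν}^γ` at `-x`, evaluated at
the increment `x s = x (s - 1) - (-x)`; so the identity is Taylor's theorem for the entire
function `E_{μ,ν}^γ`. Entireness follows from the ratio test: the ratio of consecutive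
coefficients is `(γ + m)/(m + 1) · Γ(t)/Γ(t + μ)` with `t = μ m + ν`, and log-convexity of `Γ`
gives `Γ(t + μ) ≥ (t - 1)^μ Γ(t)`, so the ratio tends to `0`.
-/

/-- The three-parameter Mittag-Leffler (Prabhakar) function
`E_{μ,ν}^γ(z) = ∑_{m=0}^∞ ((γ)_m / (m! Γ(μ m + ν))) z^m`,
where `(γ)_m = Γ(γ+m)/Γ(γ)`. -/
noncomputable def prabhakar (μ ν γ : ℝ) (z : ℂ) : ℂ :=
  ∑' m : ℕ,
    (((Real.Gamma (γ + m) / Real.Gamma γ) / (m.factorial * Real.Gamma (μ * m + ν)) : ℝ) : ℂ)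
      * z ^ m

open Filter Topology FormalMultilinearSeries

namespace Real

lemma Gamma_mul_sub_one_rpow_le_Gamma_add {t μ : ℝ} (ht : 1 < t) (hμ : 0 < μ) :
    Gamma t * (t - 1) ^ μ ≤ Gamma (t + μ) := by
  have hΓ : ∀ {s : ℝ}, 0 < s → 0 < Gamma s := Gamma_pos_of_pos
  have hslope := convexOn_log_Gamma.slope_mono_adjacent (x := t - 1) (y := t) (z := t + μ)
    (Set.mem_Ioi.mpr (by linarith)) (Set.mem_Ioi.mpr (by linarith)) (by linarith) (by linarith)
  have hrec : Gamma t = (t - 1) * Gamma (t - 1) := by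
    simpa using Gamma_add_one (s := t - 1) (by linarith)
  have hlog_step : log (Gamma t) - log (Gamma (t - 1)) = log (t - 1) := by
    rw [hrec, log_mul (by linarith) (hΓ (by linarith)).ne']
    ring
  simp only [Function.comp_apply, hlog_step, sub_sub_cancel, div_one, add_sub_cancel_left]
    at hslope
  rw [le_div_iff₀ hμ] at hslope
  rw [← log_le_log_iff (by have := hΓ (by linarith : 0 < t); positivity) (hΓ (by linarith)),
    log_mul (hΓ (by linarith)).ne' (by positivity), log_rpow (by linarith)]
  linarith

lemma tendsto_Gamma_div_Gamma_add_atTop {μ : ℝ} (hμ : 0 < μ) :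
    Tendsto (fun t ↦ Gamma t / Gamma (t + μ)) atTop (𝓝 0) := by
  have hbound : ∀ᶠ t in atTop, Gamma t / Gamma (t + μ) ≤ (t - 1) ^ (-μ) := by
    filter_upwards [eventually_gt_atTop 1] with t ht
    rw [div_le_iff₀ (Gamma_pos_of_pos (by linarith)), rpow_neg (by linarith),
      ← div_eq_inv_mul, le_div_iff₀ (by positivity)]
    exact Gamma_mul_sub_one_rpow_le_Gamma_add ht hμ
  have hnonneg : ∀ᶠ t in atTop, 0 ≤ Gamma t / Gamma (t + μ) := by
    filter_upwards [eventually_gt_atTop 0] with t ht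
    have := Gamma_pos_of_pos ht
    have := Gamma_pos_of_pos (add_pos ht hμ)
    positivity
  exact tendsto_of_tendsto_of_tendsto_of_le_of_le' tendsto_const_nhds
    ((tendsto_rpow_neg_atTop hμ).comp (tendsto_atTop_add_const_right _ (-1) tendsto_id))
    hnonneg hbound

end Real

lemma FormalMultilinearSeries.differentiable_ofScalarsSum {𝕜 E : Type*}
    [NontriviallyNormedField 𝕜] [NormedRing E] [NormedAlgebra 𝕜 E] [CompleteSpace E]
    {c : ℕ → 𝕜} (hc : (ofScalars E c).radius = ⊤) :
    Differentiable 𝕜 (ofScalarsSum (E := E) c) := by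
  have h := (ofScalars E c).hasFPowerSeriesOnBall (hc ▸ ENNReal.zero_lt_top)
  rw [hc] at h
  exact fun z ↦ (h.analyticAt_of_mem (by simp)).differentiableAt

lemma tendsto_mul_natCast_add_atTop {μ : ℝ} (hμ : 0 < μ) (ν : ℝ) :
    Tendsto (fun m : ℕ ↦ μ * m + ν) atTop atTop :=
  tendsto_atTop_add_const_right _ _ (tendsto_natCast_atTop_atTop.const_mul_atTop hμ)

noncomputable def prabhakarCoeff (μ ν γ : ℝ) (m : ℕ) : ℝ :=
  (Real.Gamma (γ + m) / Real.Gamma γ) / (m.factorial * Real.Gamma (μ * m + ν))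

section

variable {μ ν γ : ℝ}

lemma prabhakar_eq_ofScalarsSum (μ ν γ : ℝ) :
    prabhakar μ ν γ = ofScalarsSum (E := ℂ) fun m ↦ (prabhakarCoeff μ ν γ m : ℂ) := by
  ext z
  simp [prabhakar, prabhakarCoeff, ofScalarsSum_eq_tsum]

lemma prabhakarCoeff_pos (hγ : 0 < γ) {m : ℕ} (hm : 0 < μ * m + ν) :
    0 < prabhakarCoeff μ ν γ m := by
  have := Real.Gamma_pos_of_pos (by positivity : 0 < γ + m)
  have := Real.Gamma_pos_of_pos hγ
  have := Real.Gamma_pos_of_pos hm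
  unfold prabhakarCoeff
  positivity

lemma prabhakarCoeff_succ_div (hμ : 0 ≤ μ) (hγ : 0 < γ) {m : ℕ} (hm : 0 < μ * m + ν) :
    prabhakarCoeff μ ν γ (m + 1) / prabhakarCoeff μ ν γ m
      = (γ + m) / (m + 1) * (Real.Gamma (μ * m + ν) / Real.Gamma (μ * m + ν + μ)) := by
  have hγm : 0 < γ + m := by positivity
  have := Real.Gamma_pos_of_pos hγm
  have := Real.Gamma_pos_of_pos hγ
  have := Real.Gamma_pos_of_pos hm
  have := Real.Gamma_pos_of_pos (by positivity : 0 < μ * m + ν + μ)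
  have hΓγ : Real.Gamma (γ + ↑(m + 1)) = (γ + m) * Real.Gamma (γ + m) := by
    rw [Nat.cast_succ, ← add_assoc, Real.Gamma_add_one hγm.ne']
  have hΓt : μ * ↑(m + 1) + ν = μ * m + ν + μ := by push_cast; ring
  simp only [prabhakarCoeff, hΓγ, hΓt, Nat.factorial_succ]
  push_cast
  field_simp

lemma tendsto_prabhakarCoeff_succ_div (hμ : 0 < μ) (hγ : 0 < γ) :
    Tendsto (fun m : ℕ ↦ prabhakarCoeff μ ν γ (m + 1) / prabhakarCoeff μ ν γ m)
      atTop (𝓝 0) := by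
  have hlin := tendsto_mul_natCast_add_atTop hμ ν
  have hfrac : Tendsto (fun m : ℕ ↦ (γ + m) / (m + 1)) atTop (𝓝 1) := by
    simpa [add_comm] using tendsto_add_mul_div_add_mul_atTop_nhds γ 1 1 one_ne_zero
  have hlim := hfrac.mul ((Real.tendsto_Gamma_div_Gamma_add_atTop hμ).comp hlin)
  rw [mul_zero] at hlim
  refine hlim.congr' ?_
  filter_upwards [hlin.eventually_gt_atTop 0] with m hm
  exact (prabhakarCoeff_succ_div hμ.le hγ hm).symm

lemma differentiable_prabhakar (hμ : 0 < μ) (hγ : 0 < γ) :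
    Differentiable ℂ (prabhakar μ ν γ) := by
  rw [prabhakar_eq_ofScalarsSum]
  refine differentiable_ofScalarsSum (ofScalars_radius_eq_top_of_tendsto ℂ _ ?_ ?_)
  · filter_upwards [(tendsto_mul_natCast_add_atTop hμ ν).eventually_gt_atTop 0] with m hm
    exact_mod_cast (prabhakarCoeff_pos hγ hm).ne'
  · simpa [abs_div] using (tendsto_prabhakarCoeff_succ_div (ν := ν) hμ hγ).abs

end

theorem prabhakar_pgf_general (μ ν γ : ℝ) (hμ0 : 0 < μ) (hγ : 0 < γ)
    (x : ℝ) (s : ℂ) :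
    ∑' n : ℕ, s ^ n * ((Real.Gamma ν * (x ^ n / n.factorial) : ℝ) : ℂ)
        * iteratedDeriv n (prabhakar μ ν γ) (-(x : ℂ))
      = (Real.Gamma ν : ℂ) * prabhakar μ ν γ ((x : ℂ) * (s - 1)) := by
  rw [← Complex.taylorSeries_eq_of_entire' (c := -(x : ℂ)) (z := x * (s - 1))
    (differentiable_prabhakar hμ0 hγ), ← tsum_mul_left]
  refine tsum_congr fun n ↦ ?_
  rw [show (x : ℂ) * (s - 1) - -(x : ℂ) = x * s by ring]
  push_cast
  ring

/-- Probability generating function: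
`∑_n s^n Γ(ν) (x^n/n!) (d^n/dz^n E_{μ,ν}^γ)(−x) = Γ(ν) E_{μ,ν}^γ(x(s−1))`. -/
theorem prabhakar_pgf (μ ν γ : ℝ) (hμ0 : 0 < μ) (hμ1 : μ ≤ 1) (hγ : 0 < γ)
    (hν : μ * γ ≤ ν) (x : ℝ) (hx : 0 ≤ x) (s : ℂ) :
    ∑' n : ℕ, s ^ n * ((Real.Gamma ν * (x ^ n / n.factorial) : ℝ) : ℂ)
        * iteratedDeriv n (prabhakar μ ν γ) (-(x : ℂ))
      = (Real.Gamma ν : ℂ) * prabhakar μ ν γ ((x : ℂ) * (s - 1)) :=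
  prabhakar_pgf_general μ ν γ hμ0 hγ x s
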